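/- Let (Σ, μ) be a finite measure space, K bounded measurable, u_j → u in L²(μ) with sup_j ∫ e^{4u_j} dμ < ∞ and ∫ e^{4u} dμ < ∞. Then ∫ K e^{2u_j} dμ → ∫ K e^{2u} dμ. -/

import Mathlib

open MeasureTheory Real Filter

/-! Pointwise `|e^{2a} - e^{2b}| ≤ 2|a - b| (e^{2a} + e^{2b})`, so by Cauchy–Schwarz
`|∫ K e^{2u_j} - ∫ K e^{2u}| ≤ 2C ‖u_j - u‖₂ (‖e^{2u_j}‖₂ + ‖e^{2u}‖₂)`, and
`‖e^{2u_j}‖₂² = ∫ e^{4u_j} ≤ M` keeps the second factor bounded while the first tends to `0`. -/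

theorem abs_exp_sub_exp_le (s t : ℝ) : |exp s - exp t| ≤ |s - t| * (exp s + exp t) := by
  wlog hts : t ≤ s generalizing s t
  · rw [abs_sub_comm, abs_sub_comm s, add_comm]
    exact this t s (le_of_not_ge hts)
  have hexp_t : exp s * (1 - (s - t)) ≤ exp t :=
    calc exp s * (1 - (s - t)) ≤ exp s * exp (-(s - t)) :=
          mul_le_mul_of_nonneg_left (one_sub_le_exp_neg _) (exp_pos s).le
      _ = exp t := by rw [← exp_add]; ring_nf
  rw [abs_of_nonneg (sub_nonneg.2 (exp_le_exp.2 hts)), abs_of_nonneg (sub_nonneg.2 hts)]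
  nlinarith [exp_pos t]

theorem exp_two_mul_sq (a : ℝ) : exp (2 * a) ^ 2 = exp (4 * a) := by
  rw [← exp_nat_mul]; ring_nf

section

variable {α : Type*} [MeasurableSpace α] {μ : Measure α}

theorem integral_mul_le_sqrt_integral_sq_mul_sqrt_integral_sq {f g : α → ℝ}
    (hf₀ : 0 ≤ᵐ[μ] f) (hg₀ : 0 ≤ᵐ[μ] g) (hf : MemLp f 2 μ) (hg : MemLp g 2 μ) :
    ∫ x, f x * g x ∂μ ≤ √(∫ x, f x ^ 2 ∂μ) * √(∫ x, g x ^ 2 ∂μ) := by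
  have h := integral_mul_le_Lp_mul_Lq_of_nonneg Real.HolderConjugate.two_two hf₀ hg₀
    (by simpa using hf) (by simpa using hg)
  simpa only [rpow_two, sqrt_eq_rpow] using h

theorem memLp_two_exp_two_mul {v : α → ℝ} (hv : Integrable (fun x => exp (4 * v x)) μ) :
    MemLp (fun x => exp (2 * v x)) 2 μ := by
  have hsqrt : (fun x => exp (2 * v x)) = fun x => √(exp (4 * v x)) := by
    ext x; rw [← exp_half]; ring_nf
  refine (memLp_two_iff_integrable_sq ?_).2 (by simpa only [exp_two_mul_sq] using hv)
  rw [hsqrt]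
  exact continuous_sqrt.comp_aestronglyMeasurable hv.aestronglyMeasurable

theorem integral_abs_mul_exp_two_mul_le {f v : α → ℝ} (hf : MemLp f 2 μ)
    (hv : Integrable (fun x => exp (4 * v x)) μ) :
    ∫ x, |f x| * exp (2 * v x) ∂μ ≤ √(∫ x, f x ^ 2 ∂μ) * √(∫ x, exp (4 * v x) ∂μ) := by
  have h := integral_mul_le_sqrt_integral_sq_mul_sqrt_integral_sq
    (ae_of_all μ fun x => abs_nonneg (f x)) (ae_of_all μ fun x => (exp_pos (2 * v x)).le)
    hf.abs (memLp_two_exp_two_mul hv)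
  simpa only [sq_abs, exp_two_mul_sq] using h

theorem abs_integral_mul_exp_two_mul_sub_le [IsFiniteMeasure μ] {K v w : α → ℝ} {C : ℝ}
    (hK : AEStronglyMeasurable K μ) (hKbd : ∀ x, |K x| ≤ C) (hC : 0 ≤ C)
    (hvw : MemLp (fun x => v x - w x) 2 μ)
    (hv : Integrable (fun x => exp (4 * v x)) μ) (hw : Integrable (fun x => exp (4 * w x)) μ) :
    |∫ x, K x * exp (2 * v x) ∂μ - ∫ x, K x * exp (2 * w x) ∂μ| ≤
      2 * C * (√(∫ x, exp (4 * v x) ∂μ) + √(∫ x, exp (4 * w x) ∂μ)) *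
        √(∫ x, (v x - w x) ^ 2 ∂μ) := by
  have hKexp {z : α → ℝ} (hz : Integrable (fun x => exp (4 * z x)) μ) :
      Integrable (fun x => K x * exp (2 * z x)) μ :=
    ((memLp_two_exp_two_mul hz).integrable one_le_two).bdd_mul hK (ae_of_all μ hKbd)
  have hdiff_exp {z : α → ℝ} (hz : Integrable (fun x => exp (4 * z x)) μ) :
      Integrable (fun x => |v x - w x| * exp (2 * z x)) μ :=
    hvw.abs.integrable_mul (memLp_two_exp_two_mul hz)
  have hpt : ∀ x, |K x * exp (2 * v x) - K x * exp (2 * w x)| ≤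
      2 * C * (|v x - w x| * exp (2 * v x) + |v x - w x| * exp (2 * w x)) := fun x =>
    calc _ = |K x| * |exp (2 * v x) - exp (2 * w x)| := by rw [← mul_sub, abs_mul]
      _ ≤ C * (|2 * v x - 2 * w x| * (exp (2 * v x) + exp (2 * w x))) :=
          mul_le_mul (hKbd x) (abs_exp_sub_exp_le _ _) (abs_nonneg _) hC
      _ = _ := by rw [← mul_sub, abs_mul, abs_two]; ring
  calc _ = |∫ x, (K x * exp (2 * v x) - K x * exp (2 * w x)) ∂μ| := by
        rw [integral_sub (hKexp hv) (hKexp hw)]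
    _ ≤ ∫ x, |K x * exp (2 * v x) - K x * exp (2 * w x)| ∂μ := abs_integral_le_integral_abs
    _ ≤ ∫ x, 2 * C * (|v x - w x| * exp (2 * v x) + |v x - w x| * exp (2 * w x)) ∂μ :=
        integral_mono ((hKexp hv).sub (hKexp hw)).abs
          (((hdiff_exp hv).add (hdiff_exp hw)).const_mul _) hpt
    _ = 2 * C * (∫ x, |v x - w x| * exp (2 * v x) ∂μ +
          ∫ x, |v x - w x| * exp (2 * w x) ∂μ) := by
        rw [integral_const_mul, integral_add (hdiff_exp hv) (hdiff_exp hw)]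
    _ ≤ 2 * C * (√(∫ x, (v x - w x) ^ 2 ∂μ) * √(∫ x, exp (4 * v x) ∂μ) +
          √(∫ x, (v x - w x) ^ 2 ∂μ) * √(∫ x, exp (4 * w x) ∂μ)) := by
        gcongr <;> exact integral_abs_mul_exp_two_mul_le hvw ‹_›
    _ = _ := by ring

end

/-- If `u_j → u` in `L²(μ)` with uniformly bounded `∫ e^{4u_j}` and `∫ e^{4u} < ∞`,
and `K` is bounded measurable, then `∫ K e^{2u_j} dμ → ∫ K e^{2u} dμ`. -/
theorem integral_K_exp_tendsto {X : Type*} [MeasurableSpace X] (μ : Measure X)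
    [IsFiniteMeasure μ] (K u : X → ℝ) (uj : ℕ → X → ℝ)
    (hK : Measurable K) (C : ℝ) (hKbd : ∀ x, |K x| ≤ C)
    (hu : Measurable u) (huj : ∀ j, Measurable (uj j))
    (hL2 : Tendsto (fun j => ∫ x, (uj j x - u x) ^ 2 ∂μ) atTop (nhds 0))
    (hL2int : ∀ j, Integrable (fun x => (uj j x - u x) ^ 2) μ)
    (hujint : ∀ j, Integrable (fun x => Real.exp (4 * uj j x)) μ)
    (M : ℝ) (hujbd : ∀ j, ∫ x, Real.exp (4 * uj j x) ∂μ ≤ M)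
    (huint : Integrable (fun x => Real.exp (4 * u x)) μ) :
    Tendsto (fun j => ∫ x, K x * Real.exp (2 * uj j x) ∂μ) atTop
      (nhds (∫ x, K x * Real.exp (2 * u x) ∂μ)) := by
  -- `max C 0`: on an empty `X`, `hKbd` holds for negative `C` too.
  set D := 2 * max C 0 * (√M + √(∫ x, exp (4 * u x) ∂μ)) with hD
  have hdist : ∀ j, ‖∫ x, K x * exp (2 * uj j x) ∂μ - ∫ x, K x * exp (2 * u x) ∂μ‖ ≤
      D * √(∫ x, (uj j x - u x) ^ 2 ∂μ) := fun j => by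
    have hdiff : MemLp (fun x => uj j x - u x) 2 μ :=
      (memLp_two_iff_integrable_sq ((huj j).sub hu).aestronglyMeasurable).2 (hL2int j)
    refine (abs_integral_mul_exp_two_mul_sub_le hK.aestronglyMeasurable
      (fun x => (hKbd x).trans (le_max_left C 0)) (le_max_right C 0) hdiff (hujint j)
      huint).trans ?_
    rw [hD]
    gcongr
    exact hujbd j
  refine tendsto_sub_nhds_zero_iff.1 (squeeze_zero_norm hdist ?_)
  simpa using ((continuous_sqrt.tendsto 0).comp hL2).const_mul D
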